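/- Let $k\ge 3$, let $G$ be a $k$-chromatic graph critical for the chromatic number, let $u\in V(G)$, and let $G_u\bowtie K_k$ be the graph obtained from the disjoint union of $G$ and $K_k$ by identifying $u$ with one vertex of $K_k$. Then for every edge $e$ of $G_u\bowtie K_k$ we have $\chi((G_u\bowtie K_k)-e)=k$ and $es_\chi((G_u\bowtie K_k)-e)=1$. -/

import Mathlib

/-!
`G_u ⋈ K_k` is the one-vertex sum of `G` and `K_k`, and the chromatic number of a one-vertex sum
is the maximum of the chromatic numbers of the two sides (permute the colours of one side so that
the two colourings agree at the glued vertex). Deleting an edge `e` on one side leaves the other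
side `k`-chromatic, so `χ = k`. Deleting a further edge on the other side (an edge of `K_k`, or an
edge of `G` at `u`, which exists since `G` has no isolated vertices) makes both sides
`(k - 1)`-chromatic: `G` because it is critical, `K_k` because two of its vertices may then share
a colour. Hence `esχ = 1`.
-/

open SimpleGraph

/-- The chromatic edge-stability number `esχ(G)`: the minimum number of edges whose
removal from `G` results in a spanning subgraph `G'` with `χ(G') = χ(G) - 1`. -/
noncomputable def esChi {V : Type} (G : SimpleGraph V) : ℕ :=
  sInf {n : ℕ | ∃ F : Finset (Sym2 V), ↑F ⊆ G.edgeSet ∧ F.card = n ∧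
    (G.deleteEdges ↑F).chromaticNumber + 1 = G.chromaticNumber}

/-- A graph is edge-stability critical if deleting any edge decreases `esχ`. -/
def EdgeStabilityCritical {V : Type} (G : SimpleGraph V) : Prop :=
  ∀ e ∈ G.edgeSet, esChi (G.deleteEdges {e}) < esChi G

/-- `G` is `(k, ℓ)`-critical: edge-stability critical with `χ(G) = k` and `esχ(G) = ℓ`. -/
def IsKLCritical {V : Type} (G : SimpleGraph V) (k ℓ : ℕ) : Prop :=
  EdgeStabilityCritical G ∧ G.chromaticNumber = (k : ℕ∞) ∧ esChi G = ℓ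

/-- `H` is an odd cycle subgraph of `G`: the subgraph of some odd-length cycle of `G`. -/
def IsOddCycleSubgraph {V : Type} (G : SimpleGraph V) (H : G.Subgraph) : Prop :=
  ∃ (u : V) (w : G.Walk u u), w.IsCycle ∧ Odd w.length ∧ w.toSubgraph = H

/-- `H` is a path subgraph of `G`: the subgraph of some path of `G`. -/
def IsPathSubgraph {V : Type} (G : SimpleGraph V) (H : G.Subgraph) : Prop :=
  ∃ (u v : V) (w : G.Walk u v), w.IsPath ∧ w.toSubgraph = H

/-- `G_u ⋈ K_k`: the graph obtained from the disjoint union of `G` and the complete graph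
`K_k` by identifying the vertex `u` of `G` with one vertex of `K_k`; the `k - 1` remaining
clique vertices are the `Sum.inr` vertices. -/
def bowtieClique {V : Type} (G : SimpleGraph V) (u : V) (k : ℕ) :
    SimpleGraph (V ⊕ Fin (k - 1)) where
  Adj x y :=
    match x, y with
    | Sum.inl a, Sum.inl b => G.Adj a b
    | Sum.inl a, Sum.inr _ => a = u
    | Sum.inr _, Sum.inl b => b = u
    | Sum.inr i, Sum.inr j => i ≠ j
  symm := by
    constructor
    rintro (a | i) (b | j) h
    · exact G.symm.symm _ _ h
    · exact h
    · exact h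
    · exact Ne.symm h
  loopless := by
    constructor
    rintro (a | i) h
    · exact G.loopless.irrefl a h
    · exact h rfl


namespace SimpleGraph

variable {V W : Type*}

/-- `H` lives on `Option W`; its vertex `none` is identified with `u`. -/
def oneSum (G : SimpleGraph V) (u : V) (H : SimpleGraph (Option W)) : SimpleGraph (V ⊕ W) where
  Adj
    | .inl a, .inl b => G.Adj a b
    | .inl a, .inr j => a = u ∧ H.Adj none (some j)
    | .inr i, .inl b => b = u ∧ H.Adj (some i) none
    | .inr i, .inr j => H.Adj (some i) (some j)
  symm := by
    constructor
    rintro (a | i) (b | j) h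
    · exact G.symm.symm _ _ h
    · exact ⟨h.1, h.2.symm⟩
    · exact ⟨h.1, h.2.symm⟩
    · exact h.symm
  loopless := by
    constructor
    rintro (a | i) h
    · exact G.loopless.irrefl a h
    · exact H.loopless.irrefl _ h

def oneSumRight (u : V) : Option W → V ⊕ W := fun o => o.elim (.inl u) .inr

variable {G : SimpleGraph V} {u : V} {H : SimpleGraph (Option W)}

@[simp] lemma oneSum_adj_inl {a b : V} : (oneSum G u H).Adj (.inl a) (.inl b) ↔ G.Adj a b := .rfl

@[simp] lemma oneSum_adj_oneSumRight {x y : Option W} :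
    (oneSum G u H).Adj (oneSumRight u x) (oneSumRight u y) ↔ H.Adj x y := by
  rcases x with _ | i <;> rcases y with _ | j
  · simp [oneSumRight]
  · exact ⟨And.right, fun h => ⟨rfl, h⟩⟩
  · exact ⟨And.right, fun h => ⟨rfl, h⟩⟩
  · exact .rfl

def oneSumLeftHom : G →g oneSum G u H := ⟨.inl, oneSum_adj_inl.mpr⟩

def oneSumRightHom : H →g oneSum G u H := ⟨oneSumRight u, oneSum_adj_oneSumRight.mpr⟩

lemma mem_edgeSet_oneSum {e : Sym2 (V ⊕ W)} :
    e ∈ (oneSum G u H).edgeSet ↔ (∃ a b, G.Adj a b ∧ e = s(.inl a, .inl b)) ∨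
      ∃ x y, H.Adj x y ∧ e = s(oneSumRight u x, oneSumRight u y) := by
  constructor
  · induction e using Sym2.ind with | _ p q => ?_
    rcases p with a | i <;> rcases q with b | j <;> intro he
    · exact .inl ⟨a, b, he, rfl⟩
    · obtain ⟨rfl, h⟩ := he
      exact .inr ⟨none, some j, h, rfl⟩
    · obtain ⟨rfl, h⟩ := he
      exact .inr ⟨some i, none, h, rfl⟩
    · exact .inr ⟨some i, some j, he, rfl⟩
  · rintro (⟨a, b, h, rfl⟩ | ⟨x, y, h, rfl⟩) <;> simpa using h

lemma oneSum_deleteEdges_inl (a b : V) :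
    (oneSum G u H).deleteEdges {s(.inl a, .inl b)} = oneSum (G.deleteEdges {s(a, b)}) u H := by
  ext (a' | i) (b' | j) <;> simp [oneSum]

lemma oneSum_deleteEdges_oneSumRight (x y : Option W) :
    (oneSum G u H).deleteEdges {s(oneSumRight u x, oneSumRight u y)} =
      oneSum G u (H.deleteEdges {s(x, y)}) := by
  ext (a' | i) (b' | j) <;> rcases x with _ | x <;> rcases y with _ | y <;>
    simp [oneSum, oneSumRight] <;> tauto

theorem Colorable.oneSum {n : ℕ} (hG : G.Colorable n) (hH : H.Colorable n) :
    (oneSum G u H).Colorable n := by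
  obtain ⟨c⟩ := hG
  obtain ⟨d⟩ := hH
  let σ := Equiv.swap (d none) (c u)
  have hσ : σ (d none) = c u := Equiv.swap_apply_left _ _
  refine ⟨Coloring.mk (Sum.elim c fun j => σ (d (some j))) ?_⟩
  rintro (a | i) (b | j) h
  · exact c.valid h
  · obtain ⟨rfl, h⟩ := h
    simpa [← hσ] using d.valid h
  · obtain ⟨rfl, h⟩ := h
    simpa [← hσ] using d.valid h
  · simpa using d.valid h

theorem chromaticNumber_oneSum :
    (oneSum G u H).chromaticNumber = max G.chromaticNumber H.chromaticNumber := by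
  refine le_antisymm ?_ (max_le (chromaticNumber_mono_of_hom oneSumLeftHom)
    (chromaticNumber_mono_of_hom oneSumRightHom))
  rcases eq_or_ne (max G.chromaticNumber H.chromaticNumber) ⊤ with h | h
  · exact h ▸ le_top
  obtain ⟨n, hn⟩ := ENat.ne_top_iff_exists.mp h
  have hGH := hn.ge
  rw [max_le_iff, chromaticNumber_le_iff_colorable, chromaticNumber_le_iff_colorable] at hGH
  exact hn ▸ (hGH.1.oneSum hGH.2).chromaticNumber_le

theorem chromaticNumber_top_deleteEdges_add_one [Fintype V] {x y : V} (hxy : x ≠ y) :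
    ((⊤ : SimpleGraph V).deleteEdges {s(x, y)}).chromaticNumber + 1 = Fintype.card V := by
  classical
  have hcard : Fintype.card {z // z ≠ y} + 1 = Fintype.card V := by
    rw [Fintype.card_subtype_compl, Fintype.card_subtype_eq]
    have := Fintype.card_pos_iff.2 ⟨y⟩
    omega
  rw [← hcard, Nat.cast_add, Nat.cast_one]
  congr 1
  refine le_antisymm ?_ ?_
  · let c : ((⊤ : SimpleGraph V).deleteEdges {s(x, y)}).Coloring {z // z ≠ y} :=
      Coloring.mk (fun z => if h : z = y then ⟨x, hxy⟩ else ⟨z, h⟩) ?_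
    · exact c.colorable.chromaticNumber_le
    · intro z w h
      rw [deleteEdges_adj, top_adj, Set.mem_singleton_iff, Sym2.eq_iff] at h
      by_cases hz : z = y <;> by_cases hw : w = y <;> grind
  · refine le_chromaticNumber_of_pairwise_adj (ι := {z // z ≠ y}) (by simp) Subtype.val ?_
    intro z w hzw
    simp [Subtype.val_injective.ne hzw, z.2, w.2]

end SimpleGraph

lemma bowtieClique_eq_oneSum {V : Type} (G : SimpleGraph V) (u : V) (k : ℕ) :
    bowtieClique G u k = G.oneSum u ⊤ := by
  ext (a | i) (b | j) <;> simp [bowtieClique, oneSum]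

lemma esChi_eq_one {V : Type} {G : SimpleGraph V} {f : Sym2 V} {n : ℕ} (hf : f ∈ G.edgeSet)
    (hG : G.chromaticNumber = n + 1) (hGf : (G.deleteEdges {f}).chromaticNumber = n) :
    esChi G = 1 := by
  have h1 : 1 ∈ {m : ℕ | ∃ F : Finset (Sym2 V), ↑F ⊆ G.edgeSet ∧ F.card = m ∧
      (G.deleteEdges ↑F).chromaticNumber + 1 = G.chromaticNumber} :=
    ⟨{f}, by simpa using hf, Finset.card_singleton f, by simpa [hG] using hGf⟩
  refine le_antisymm (Nat.sInf_le h1) (le_csInf ⟨1, h1⟩ ?_)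
  rintro m ⟨F, -, rfl, hF⟩
  rw [Nat.one_le_iff_ne_zero, Ne, Finset.card_eq_zero]
  rintro rfl
  simp [hG] at hF

theorem bowtie_deleteEdge_general {V : Type} (G : SimpleGraph V) (u : V) (k : ℕ)
    (hk : 3 ≤ k) (hiso : ∀ v : V, ∃ w : V, G.Adj v w)
    (hchi : G.chromaticNumber = (k : ℕ∞))
    (hcrit : ∀ e ∈ G.edgeSet, (G.deleteEdges {e}).chromaticNumber + 1 = (k : ℕ∞)) :
    ∀ e ∈ (bowtieClique G u k).edgeSet,
      ((bowtieClique G u k).deleteEdges {e}).chromaticNumber = (k : ℕ∞) ∧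
      esChi ((bowtieClique G u k).deleteEdges {e}) = 1 := by
  obtain ⟨n, rfl⟩ : ∃ n, k = n + 1 := ⟨k - 1, by omega⟩
  push_cast at hchi hcrit ⊢
  rw [bowtieClique_eq_oneSum]
  set K : SimpleGraph (Option (Fin (n + 1 - 1))) := ⊤
  have hGe : ∀ e ∈ G.edgeSet, (G.deleteEdges {e}).chromaticNumber = n := fun e he =>
    ENat.add_left_injective_of_ne_top ENat.one_ne_top (hcrit e he)
  have hK : K.chromaticNumber = n + 1 := by simp [K, chromaticNumber_top]
  have hKe : ∀ x y, x ≠ y → (K.deleteEdges {s(x, y)}).chromaticNumber = n := fun x y hxy =>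
    ENat.add_left_injective_of_ne_top ENat.one_ne_top
      (by simpa using chromaticNumber_top_deleteEdges_add_one hxy)
  intro e he
  rcases mem_edgeSet_oneSum.mp he with ⟨a, b, hab, rfl⟩ | ⟨x, y, hxy, rfl⟩
  · have hχ : ((G.deleteEdges {s(a, b)}).oneSum u K).chromaticNumber = n + 1 := by
      rw [chromaticNumber_oneSum, hGe _ hab, hK]; simp
    rw [oneSum_deleteEdges_inl]
    refine ⟨hχ, esChi_eq_one (f := s(oneSumRight u none, oneSumRight u (some ⟨0, by omega⟩)))
      (by simp [K]) hχ ?_⟩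
    rw [oneSum_deleteEdges_oneSumRight, chromaticNumber_oneSum, hGe _ hab, hKe _ _ (by simp),
      max_self]
  · obtain ⟨w, huw⟩ := hiso u
    have hχ : (G.oneSum u (K.deleteEdges {s(x, y)})).chromaticNumber = n + 1 := by
      rw [chromaticNumber_oneSum, hchi, hKe _ _ hxy.ne]; simp
    rw [oneSum_deleteEdges_oneSumRight]
    refine ⟨hχ, esChi_eq_one (f := s(.inl u, .inl w)) (by simpa using huw) hχ ?_⟩
    rw [oneSum_deleteEdges_inl, chromaticNumber_oneSum, hGe _ huw, hKe _ _ hxy.ne, max_self]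

/-- If `k ≥ 3` and `G` is a `k`-chromatic graph (without isolated vertices) critical for
the chromatic number, then for every edge `e` of `G_u ⋈ K_k` the graph `(G_u ⋈ K_k) - e`
has chromatic number `k` and chromatic edge-stability number `1`. -/
theorem bowtie_deleteEdge {V : Type} [Fintype V] (G : SimpleGraph V) (u : V) (k : ℕ)
    (hk : 3 ≤ k) (hiso : ∀ v : V, ∃ w : V, G.Adj v w)
    (hchi : G.chromaticNumber = (k : ℕ∞))
    (hcrit : ∀ e ∈ G.edgeSet, (G.deleteEdges {e}).chromaticNumber + 1 = (k : ℕ∞)) :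
    ∀ e ∈ (bowtieClique G u k).edgeSet,
      ((bowtieClique G u k).deleteEdges {e}).chromaticNumber = (k : ℕ∞) ∧
      esChi ((bowtieClique G u k).deleteEdges {e}) = 1 :=
  bowtie_deleteEdge_general G u k hk hiso hchi hcrit
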